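/- arXiv:1811.11331 — 3 statements merged into one kernel-verified Lean document; each statement's English description precedes it below -/
import Mathlib

section
/- Let R > 0 and let x ∈ ℝ². Any set S of points in the closed disk of radius R centered at x such that any two distinct points of S are at Euclidean distance strictly greater than R has cardinality at most 5. -/
/-!
Two points of the disk that are seen from its centre under an angle of at most `π / 3` are at
distance at most `R`, by the law of cosines. Among six nonzero vectors of the plane `ℂ` two span
such an angle: measure arguments from one of them, `z₀`, in `[0, 2π)`. A point with argument in
`[0, π / 3] ∪ [5π / 3, 2π)` is close to `z₀`; otherwise the five remaining arguments lie in
`(π / 3, 5π / 3)`, which is covered by four intervals of length `π / 3`.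
-/

open Real InnerProductGeometry

theorem Real.Angle.abs_toReal_coe_le (t : ℝ) : |(t : Angle).toReal| ≤ |t| := by
  by_cases ht : t ∈ Set.Ioc (-π) π
  · rw [Angle.toReal_coe_eq_self_iff_mem_Ioc.2 ht]
  · rw [Set.mem_Ioc, not_and_or, not_lt, not_le] at ht
    exact (Angle.abs_toReal_le_pi _).trans (le_abs'.2 (ht.imp id le_of_lt))

theorem Complex.angle_le_abs_of_coe_eq_arg_sub_arg {x y : ℂ} (hx : x ≠ 0) (hy : y ≠ 0) {t : ℝ}
    (ht : (t : Angle) = arg x - arg y) : angle x y ≤ |t| := by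
  rw [angle_eq_abs_arg hx hy, ← arg_coe_angle_toReal_eq_arg, arg_div_coe_angle hx hy, ← ht]
  exact Angle.abs_toReal_coe_le t

theorem exists_ne_abs_sub_lt_of_forall_mem_Ico {α : Type*} {s : Finset α} {f : α → ℝ}
    {c d : ℝ} {n : ℕ} (hd : 0 < d) (hn : n < s.card)
    (hf : ∀ z ∈ s, f z ∈ Set.Ico c (c + n * d)) :
    ∃ a ∈ s, ∃ b ∈ s, a ≠ b ∧ |f a - f b| < d := by
  have hbin : ∀ z ∈ s, ⌊(f z - c) / d⌋ ∈ Finset.Ico (0 : ℤ) n := by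
    intro z hz
    obtain ⟨hlo, hhi⟩ := hf z hz
    rw [Finset.mem_Ico, Int.floor_nonneg, Int.floor_lt, le_div_iff₀ hd, div_lt_iff₀ hd]
    push_cast
    constructor <;> linarith
  obtain ⟨a, ha, b, hb, hab, hfloor⟩ :=
    Finset.exists_ne_map_eq_of_card_lt_of_maps_to (by simpa using hn) hbin
  refine ⟨a, ha, b, hb, hab, ?_⟩
  have := Int.abs_sub_lt_one_of_floor_eq_floor hfloor
  rwa [← sub_div, sub_sub_sub_cancel_right, abs_div, abs_of_pos hd, div_lt_one hd] at this

theorem norm_sub_le_of_angle_le_pi_div_three {V : Type*} [NormedAddCommGroup V]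
    [InnerProductSpace ℝ V] {a b : V} {R : ℝ} (ha : ‖a‖ ≤ R) (hb : ‖b‖ ≤ R)
    (hab : angle a b ≤ π / 3) : ‖a - b‖ ≤ R := by
  have hcos : 1 / 2 ≤ cos (angle a b) := by
    rw [← cos_pi_div_three]
    exact cos_le_cos_of_nonneg_of_le_pi (angle_nonneg a b) (by linarith [pi_pos]) hab
  have hR : 0 ≤ R := (norm_nonneg a).trans ha
  refine (mul_self_le_mul_self_iff (norm_nonneg _) hR).2 ?_
  rw [norm_sub_sq_eq_norm_sq_add_norm_sq_sub_two_mul_norm_mul_norm_mul_cos_angle]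
  have := mul_le_mul_of_nonneg_left hcos (mul_nonneg (norm_nonneg a) (norm_nonneg b))
  nlinarith [mul_nonneg (sub_nonneg.2 ha) (sub_nonneg.2 hb),
    mul_nonneg (norm_nonneg a) (sub_nonneg.2 ha), mul_nonneg (norm_nonneg b) (sub_nonneg.2 hb)]

theorem Complex.exists_ne_angle_le_pi_div_three {T : Finset ℂ} (h0 : (0 : ℂ) ∉ T)
    (hT : 5 < T.card) : ∃ a ∈ T, ∃ b ∈ T, a ≠ b ∧ angle a b ≤ π / 3 := by
  obtain ⟨z₀, hz₀⟩ : T.Nonempty := Finset.card_pos.1 (by omega)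
  have hne : ∀ z ∈ T, z ≠ 0 := fun z hz h => h0 (h ▸ hz)
  set θ : ℂ → ℝ := fun z => toIcoMod two_pi_pos 0 (arg z - arg z₀)
  have hθ : ∀ z, (θ z : Angle) = arg z - arg z₀ := fun z => by
    rw [Angle.coe_toIcoMod, Angle.coe_sub]
  have hθ_mem : ∀ z, θ z ∈ Set.Ico 0 (2 * π) := fun z => by
    simpa using toIcoMod_mem_Ico two_pi_pos 0 (arg z - arg z₀)
  by_cases hnear : ∃ z ∈ T.erase z₀, θ z ≤ π / 3 ∨ 5 * π / 3 ≤ θ z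
  · obtain ⟨z, hz, hθz⟩ := hnear
    have hzT := Finset.mem_of_mem_erase hz
    refine ⟨z, hzT, z₀, hz₀, Finset.ne_of_mem_erase hz, ?_⟩
    obtain ⟨hθ_nonneg, hθ_lt⟩ := hθ_mem z
    rcases hθz with h | h
    · calc angle z z₀ ≤ |θ z| :=
            angle_le_abs_of_coe_eq_arg_sub_arg (hne z hzT) (hne z₀ hz₀) (hθ z)
        _ ≤ π / 3 := by rwa [abs_of_nonneg hθ_nonneg]
    · calc angle z z₀ ≤ |θ z - 2 * π| :=
            angle_le_abs_of_coe_eq_arg_sub_arg (hne z hzT) (hne z₀ hz₀)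
              (by rw [Angle.coe_sub, Angle.coe_two_pi, sub_zero, hθ])
        _ ≤ π / 3 := by rw [abs_of_neg (by linarith)]; linarith
  · push Not at hnear
    obtain ⟨a, ha, b, hb, hab, hθab⟩ :=
      exists_ne_abs_sub_lt_of_forall_mem_Ico (f := θ) (c := π / 3) (d := π / 3) (n := 4)
        (by positivity) (by rw [Finset.card_erase_of_mem hz₀]; omega)
        (fun z hz => ⟨(hnear z hz).1.le, by linarith [(hnear z hz).2]⟩)
    have haT := Finset.mem_of_mem_erase ha
    have hbT := Finset.mem_of_mem_erase hb
    refine ⟨a, haT, b, hbT, hab, ?_⟩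
    calc angle a b ≤ |θ a - θ b| :=
          angle_le_abs_of_coe_eq_arg_sub_arg (hne a haT) (hne b hbT)
            (by rw [Angle.coe_sub, hθ, hθ]; abel)
      _ ≤ π / 3 := hθab.le

theorem packing_in_disk_card_le_five_general
    (R : ℝ) (x : EuclideanSpace ℝ (Fin 2))
    (S : Finset (EuclideanSpace ℝ (Fin 2)))
    (hS : ∀ y ∈ S, dist y x ≤ R ∧ y ≠ x)
    (hsep : ∀ a ∈ S, ∀ b ∈ S, a ≠ b → R < dist a b) :
    S.card ≤ 5 := by
  by_contra! hcard
  let e : EuclideanSpace ℝ (Fin 2) ≃ₗᵢ[ℝ] ℂ := Complex.orthonormalBasisOneI.repr.symm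
  let f : EuclideanSpace ℝ (Fin 2) → ℂ := fun y => e (y - x)
  have hf : Function.Injective f := e.injective.comp sub_left_injective
  have h0 : (0 : ℂ) ∉ S.image f := by
    intro hmem
    obtain ⟨y, hy, hy0⟩ := Finset.mem_image.1 hmem
    exact (hS y hy).2 (sub_eq_zero.1 (e.map_eq_zero_iff.1 hy0))
  obtain ⟨a, ha, b, hb, hab, hangle⟩ :
      ∃ a ∈ S, ∃ b ∈ S, f a ≠ f b ∧ angle (f a) (f b) ≤ π / 3 := by
    simpa only [Finset.exists_mem_image] using
      Complex.exists_ne_angle_le_pi_div_three h0 (by rwa [Finset.card_image_of_injective _ hf])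
  replace hangle := (e.toLinearIsometry.angle_map (a - x) (b - x)).symm.trans_le hangle
  simp only [dist_eq_norm] at hS hsep
  have hclose := norm_sub_le_of_angle_le_pi_div_three (hS a ha).1 (hS b hb).1 hangle
  rw [sub_sub_sub_cancel_right] at hclose
  exact (hsep a ha b hb (ne_of_apply_ne f hab)).not_ge hclose

/-- Any set of points in the closed disk of radius `R` around `x` in the plane,
each distinct from `x`, that are pairwise more than `R` apart, has at most 5 points. -/
theorem packing_in_disk_card_le_five
    (R : ℝ) (hR : 0 < R) (x : EuclideanSpace ℝ (Fin 2))
    (S : Finset (EuclideanSpace ℝ (Fin 2)))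
    (hS : ∀ y ∈ S, dist y x ≤ R ∧ y ≠ x)
    (hsep : ∀ a ∈ S, ∀ b ∈ S, a ≠ b → R < dist a b) :
    S.card ≤ 5 :=
  packing_in_disk_card_le_five_general R x S hS hsep
end

section
/- Let x₁,…,xₙ ∈ ℝ² and R > 0, and define the Gilbert graph G on vertex set {1,…,n} with an edge between i ≠ j iff |x_i - x_j| ≤ R. For each vertex i, let N_i = {j < i : |x_i - x_j| ≤ R} be its lesser neighborhood, and let A be the graph in which each vertex i is adjacent to, for each connected component C of the subgraph of G induced on N_i, the maximum-index vertex max C (and these are all edges of A, symmetrized). Then for every i, the number of connected components of the induced subgraph of G on N_i is at most 5; equivalently, every vertex initiates at most 5 connections. -/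
/-! Representatives of distinct components of the Gilbert graph induced on `N_i` are pairwise more
than `R` apart, yet all lie within `R` of `x_i`. By the law of cosines, two such points subtend an
angle greater than `π / 3` at `x_i`. Among any six directions in the plane, however, two make an
angle of at most `π / 3` (pigeonhole on arcs of length `π / 3`), so there are at most five
components. -/

noncomputable section

/-- The Gilbert graph on vertex set `Fin n`: `i ≠ j` are adjacent iff `dist (x i) (x j) ≤ R`. -/
def gilbert (n : ℕ) (x : Fin n → EuclideanSpace ℝ (Fin 2)) (R : ℝ) : SimpleGraph (Fin n) where
  Adj i j := i ≠ j ∧ dist (x i) (x j) ≤ R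
  symm := by
    constructor; intro i j h
    exact ⟨h.1.symm, by rw [dist_comm]; exact h.2⟩
  loopless := by constructor; intro i h; exact h.1 rfl

/-- The lesser neighborhood `N_i = {j < i : dist (x i) (x j) ≤ R}`. -/
def lesserN (n : ℕ) (x : Fin n → EuclideanSpace ℝ (Fin 2)) (R : ℝ) (i : Fin n) : Set (Fin n) :=
  {j | j < i ∧ dist (x i) (x j) ≤ R}

/-- Vertex `i` initiates a connection to `j` iff `j` is the maximum-index vertex of its
connected component in the Gilbert graph induced on the lesser neighborhood `N_i`. -/
def initiates (n : ℕ) (x : Fin n → EuclideanSpace ℝ (Fin 2)) (R : ℝ) (i j : Fin n) : Prop :=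
  ∃ hj : j ∈ lesserN n x R i,
    ∀ k, ∀ hk : k ∈ lesserN n x R i,
      ((gilbert n x R).induce (lesserN n x R i)).Reachable ⟨j, hj⟩ ⟨k, hk⟩ → k ≤ j

/-- The topology produced by Algorithm 1: the symmetrization of the initiated connections. -/
def Agraph (n : ℕ) (x : Fin n → EuclideanSpace ℝ (Fin 2)) (R : ℝ) : SimpleGraph (Fin n) where
  Adj i j := initiates n x R i j ∨ initiates n x R j i
  symm := ⟨fun i j h => Or.symm h⟩
  loopless := by
    constructor; intro i h
    rcases h with ⟨hj, _⟩ | ⟨hj, _⟩ <;> exact absurd hj.1 (lt_irrefl i)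

open Real InnerProductGeometry

lemma one_half_le_cos_of_abs_le_pi_div_three {t : ℝ} (h : |t| ≤ π / 3) : 1 / 2 ≤ cos t := by
  rw [← cos_abs, ← cos_pi_div_three]
  exact cos_le_cos_of_nonneg_of_le_pi (abs_nonneg t) (by linarith [pi_pos]) h

lemma exists_ne_one_half_le_cos_sub_of_mem_Ico {ι : Type*} [Fintype ι]
    (hι : 5 < Fintype.card ι) (β : ι → ℝ) (k₀ : ι) (h₀ : β k₀ = 0)
    (hβ : ∀ k, β k ∈ Set.Ico 0 (2 * π)) : ∃ j k, j ≠ k ∧ 1 / 2 ≤ cos (β j - β k) := by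
  classical
  by_contra! hfar
  have hπ := pi_pos
  have hmid : ∀ k ≠ k₀, 1 < β k / (π / 3) ∧ β k / (π / 3) < 5 := by
    intro k hk
    have hcos : cos (β k) < 1 / 2 := by simpa [h₀] using hfar k k₀ hk
    obtain ⟨hβ0, hβ2π⟩ := hβ k
    rw [lt_div_iff₀ (by positivity), div_lt_iff₀ (by positivity)]
    constructor
    · by_contra! hle
      exact hcos.not_ge
        (one_half_le_cos_of_abs_le_pi_div_three (abs_le.2 ⟨by linarith, by linarith⟩))
    · by_contra! hle
      rw [← cos_sub_two_pi] at hcos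
      exact hcos.not_ge
        (one_half_le_cos_of_abs_le_pi_div_three (abs_le.2 ⟨by linarith, by linarith⟩))
  -- the five angles other than `β k₀` fall into the four bins `[mπ/3, (m+1)π/3)`, `1 ≤ m ≤ 4`
  obtain ⟨j, -, k, -, hjk, hbin⟩ := Finset.exists_ne_map_eq_of_card_lt_of_maps_to
    (s := Finset.univ.erase k₀) (t := Finset.Icc (1 : ℤ) 4) (f := fun k => ⌊β k / (π / 3)⌋)
    (by simp; omega) (by
      intro k hk
      obtain ⟨h1, h5⟩ := hmid k (Finset.ne_of_mem_erase hk)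
      simp only [Finset.coe_Icc, Set.mem_Icc]
      exact ⟨Int.le_floor.2 (by exact_mod_cast h1.le),
        Int.lt_add_one_iff.1 (Int.floor_lt.2 (by exact_mod_cast h5))⟩)
  have hclose : |β j - β k| ≤ π / 3 := by
    have := Int.abs_sub_lt_one_of_floor_eq_floor hbin
    rw [← sub_div, abs_div, abs_of_pos (by positivity : 0 < π / 3),
      div_lt_one (by positivity)] at this
    exact this.le
  exact (hfar j k hjk).not_ge (one_half_le_cos_of_abs_le_pi_div_three hclose)

lemma exists_ne_one_half_le_cos_sub {ι : Type*} [Fintype ι] (hι : 5 < Fintype.card ι)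
    (θ : ι → ℝ) : ∃ j k, j ≠ k ∧ 1 / 2 ≤ cos (θ j - θ k) := by
  obtain ⟨k₀⟩ : Nonempty ι := Fintype.card_pos_iff.1 (by omega)
  set β : ι → ℝ := fun k => toIcoMod two_pi_pos 0 (θ k - θ k₀)
  set m : ι → ℤ := fun k => toIcoDiv two_pi_pos 0 (θ k - θ k₀)
  have hβ : ∀ k, (θ k - θ k₀) - β k = m k * (2 * π) :=
    fun k => self_sub_toIcoMod_eq_mul two_pi_pos 0 _
  obtain ⟨j, k, hjk, hcos⟩ := exists_ne_one_half_le_cos_sub_of_mem_Ico hι β k₀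
    (by simp [β]) (fun k => by simpa using toIcoMod_mem_Ico two_pi_pos 0 (θ k - θ k₀))
  have hdiff : β j - β k = (θ j - θ k) - ((m j - m k : ℤ) : ℝ) * (2 * π) := by
    push_cast
    linarith [hβ j, hβ k]
  rw [hdiff, cos_sub_int_mul_two_pi] at hcos
  exact ⟨j, k, hjk, hcos⟩

lemma norm_sub_le_of_one_half_le_cos_angle {V : Type*} [NormedAddCommGroup V]
    [InnerProductSpace ℝ V] {x y : V} {R : ℝ} (hx : ‖x‖ ≤ R) (hy : ‖y‖ ≤ R)
    (hxy : 1 / 2 ≤ cos (angle x y)) : ‖x - y‖ ≤ R := by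
  have hcos := norm_sub_sq_eq_norm_sq_add_norm_sq_sub_two_mul_norm_mul_norm_mul_cos_angle x y
  have hx0 := norm_nonneg x
  have hy0 := norm_nonneg y
  -- `‖x - y‖² ≤ ‖x‖² + ‖y‖² - ‖x‖ ‖y‖ ≤ max ‖x‖ ‖y‖ ²`
  have hsq : ‖x - y‖ * ‖x - y‖ ≤ R * R := by
    nlinarith [mul_nonneg hx0 hy0, mul_nonneg (sub_nonneg.2 hx) (sub_nonneg.2 hy),
      mul_nonneg hx0 (sub_nonneg.2 hx), mul_nonneg hy0 (sub_nonneg.2 hy)]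
  nlinarith [norm_nonneg (x - y)]

lemma Complex.cos_angle_eq_cos_arg_sub {x y : ℂ} (hx : x ≠ 0) (hy : y ≠ 0) :
    Real.cos (angle x y) = Real.cos (x.arg - y.arg) := by
  rw [angle_eq_abs_arg hx hy, cos_abs, ← Real.Angle.cos_coe, arg_div_coe_angle hx hy,
    ← Real.Angle.coe_sub, Real.Angle.cos_coe]

lemma Complex.card_le_five_of_pairwise_lt_dist {ι : Type*} [Finite ι] (R : ℝ) (c : ℂ)
    (p : ι → ℂ) (hp : ∀ k, dist (p k) c ≤ R)
    (hfar : Pairwise fun j k => R < dist (p j) (p k)) : Nat.card ι ≤ 5 := by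
  have := Fintype.ofFinite ι
  by_contra! hcard
  rw [Nat.card_eq_fintype_card] at hcard
  obtain ⟨j, k, hjk, hcos⟩ := exists_ne_one_half_le_cos_sub hcard fun k => (p k - c).arg
  have hnorm : ∀ k, ‖p k - c‖ ≤ R := fun k => by simpa [dist_eq] using hp k
  refine (hfar hjk).not_ge ?_
  rw [dist_eq, ← sub_sub_sub_cancel_right (p j) (p k) c]
  by_cases hjc : p j = c
  · simpa [hjc, norm_sub_rev] using hnorm k
  by_cases hkc : p k = c
  · simpa [hkc, norm_sub_rev] using hnorm j
  refine norm_sub_le_of_one_half_le_cos_angle (hnorm j) (hnorm k) ?_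
  rwa [cos_angle_eq_cos_arg_sub (sub_ne_zero.2 hjc) (sub_ne_zero.2 hkc)]

lemma lt_dist_of_connectedComponentMk_ne {n : ℕ} {x : Fin n → EuclideanSpace ℝ (Fin 2)}
    {R : ℝ} {s : Set (Fin n)} {u v : s}
    (h : ((gilbert n x R).induce s).connectedComponentMk u ≠
      ((gilbert n x R).induce s).connectedComponentMk v) :
    R < dist (x u) (x v) := by
  by_contra! hle
  have huv : (u : Fin n) ≠ v := fun huv => h (by rw [Subtype.ext huv])
  exact h (SimpleGraph.ConnectedComponent.sound (SimpleGraph.Adj.reachable ⟨huv, hle⟩))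

theorem components_of_lesser_neighborhood_le_five_general
    (n : ℕ) (x : Fin n → EuclideanSpace ℝ (Fin 2)) (R : ℝ) (i : Fin n) :
    Nat.card ((gilbert n x R).induce (lesserN n x R i)).ConnectedComponent ≤ 5 := by
  let e := Complex.orthonormalBasisOneI.repr.symm
  refine Complex.card_le_five_of_pairwise_lt_dist R (e (x i)) (fun C => e (x C.out))
    (fun C => ?_) (fun C D hCD => ?_)
  · simp only [LinearIsometryEquiv.dist_map, dist_comm]
    exact C.out.2.2
  · simp only [LinearIsometryEquiv.dist_map]
    exact lt_dist_of_connectedComponentMk_ne (C.out_eq.trans_ne (hCD.trans_eq D.out_eq.symm))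

/-- Every vertex initiates at most 5 connections: the Gilbert graph induced on the
lesser neighborhood of any vertex has at most 5 connected components. -/
theorem components_of_lesser_neighborhood_le_five
    (n : ℕ) (x : Fin n → EuclideanSpace ℝ (Fin 2)) (R : ℝ) (hR : 0 < R) (i : Fin n) :
    Nat.card ((gilbert n x R).induce (lesserN n x R i)).ConnectedComponent ≤ 5 :=
  components_of_lesser_neighborhood_le_five_general n x R i
end
end

section
/- Let d ≥ 1 and define μ_d as the maximum number of points in the closed unit ball of ℝ^d, each distinct from the center, that are pairwise at distance strictly greater than 1. Then μ_d is finite for every d ≥ 1, μ_1 = 2, and μ_2 = 5. -/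
/-- The set of cardinalities of packings in the closed unit ball of `ℝ^d`: sets of points
of norm at most 1, each distinct from the center, pairwise more than distance 1 apart. -/
def muSet (d : ℕ) : Set ℕ :=
  {k | ∃ S : Finset (EuclideanSpace ℝ (Fin d)),
    (∀ y ∈ S, ‖y‖ ≤ 1 ∧ y ≠ 0) ∧
    (∀ a ∈ S, ∀ b ∈ S, a ≠ b → 1 < dist a b) ∧
    S.card = k}

/-- `μ_d`: the maximum size of such a packing. -/
noncomputable def mu (d : ℕ) : ℕ := sSup (muSet d)

section Aux

open Real

/- ## Boundedness in every dimension -/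

lemma bdd_muSet (d : ℕ) : BddAbove (muSet d) := by
  have hc : TotallyBounded (Metric.closedBall (0 : EuclideanSpace ℝ (Fin d)) 1) :=
    (isCompact_closedBall _ _).totallyBounded
  rw [Metric.totallyBounded_iff] at hc
  obtain ⟨t, htf, hts⟩ := hc (1/2) (by norm_num)
  obtain ⟨T, hT⟩ := htf.exists_finset_coe
  refine ⟨T.card, fun k hk => ?_⟩
  obtain ⟨S, hS1, hS2, rfl⟩ := hk
  classical
  have hcov : ∀ y ∈ S, ∃ c ∈ T, y ∈ Metric.ball c (1/2) := by
    intro y hy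
    have : y ∈ ⋃ c ∈ t, Metric.ball c (1/2) := hts (by
      exact mem_closedBall_zero_iff.mpr (hS1 y hy).1)
    simp only [Set.mem_iUnion, exists_prop] at this
    obtain ⟨c, hc1, hc2⟩ := this
    exact ⟨c, Finset.mem_coe.mp (hT ▸ hc1), hc2⟩
  choose f hf1 hf2 using hcov
  refine Finset.card_le_card_of_injOn
    (fun y => if h : y ∈ S then f y h else Classical.arbitrary _) ?_ ?_
  · intro a ha
    have ha' : a ∈ S := by simpa using ha
    simpa [ha'] using hf1 a ha'
  · intro a ha b hb hab
    simp only [Finset.mem_coe] at ha hb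
    simp only [ha, hb, dif_pos] at hab
    by_contra hne
    have := hS2 a ha b hb hne
    have da := hf2 a ha
    have db := hf2 b hb
    rw [hab] at da
    have : dist a b < 1 := by
      calc dist a b ≤ dist a (f b hb) + dist (f b hb) b := dist_triangle _ _ _
        _ < 1/2 + 1/2 := by
            rw [Metric.mem_ball] at da db
            rw [dist_comm (f b hb) b]; linarith
        _ = 1 := by norm_num
    linarith

/- ## Dimension one -/

lemma single_ne_zero' (x : ℝ) (hx : x ≠ 0) : EuclideanSpace.single (0 : Fin 1) x ≠ 0 := by
  intro h
  have := congrArg (fun v : EuclideanSpace ℝ (Fin 1) => v 0) h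
  simp [EuclideanSpace.single_apply] at this
  exact hx this

lemma dist_fin1 (a b : EuclideanSpace ℝ (Fin 1)) : dist a b = |a 0 - b 0| := by
  rw [EuclideanSpace.dist_eq, Fin.sum_univ_one, Real.sqrt_sq dist_nonneg, Real.dist_eq]

lemma norm_fin1 (a : EuclideanSpace ℝ (Fin 1)) : ‖a‖ = |a 0| := by
  rw [EuclideanSpace.norm_eq, Fin.sum_univ_one, Real.norm_eq_abs, sq_abs, Real.sqrt_sq_eq_abs]

lemma two_mem : (2 : ℕ) ∈ muSet 1 := by
  classical
  refine ⟨{EuclideanSpace.single (0 : Fin 1) (1:ℝ),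
    EuclideanSpace.single (0 : Fin 1) (-1:ℝ)}, ?_, ?_, ?_⟩
  · intro y hy
    simp only [Finset.mem_insert, Finset.mem_singleton] at hy
    rcases hy with rfl | rfl <;>
      refine ⟨by rw [EuclideanSpace.norm_single]; norm_num, single_ne_zero' _ (by norm_num)⟩
  · intro a ha b hb hab
    simp only [Finset.mem_insert, Finset.mem_singleton] at ha hb
    have key : dist (EuclideanSpace.single (0:Fin 1) (1:ℝ))
        (EuclideanSpace.single (0:Fin 1) (-1:ℝ)) = 2 := by
      rw [dist_fin1]
      simp [EuclideanSpace.single_apply]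
      norm_num
    rcases ha with rfl | rfl <;> rcases hb with rfl | rfl <;> first
      | exact absurd rfl hab
      | (rw [key]; norm_num)
      | (rw [dist_comm, key]; norm_num)
  · rw [Finset.card_insert_of_notMem, Finset.card_singleton]
    simp only [Finset.mem_singleton]
    intro h
    have := congrArg (fun v : EuclideanSpace ℝ (Fin 1) => v 0) h
    simp [EuclideanSpace.single_apply] at this
    norm_num at this

lemma le_two : ∀ k ∈ muSet 1, k ≤ 2 := by
  classical
  rintro k ⟨S, hS1, hS2, rfl⟩
  have key : ∀ a ∈ S, ∀ b ∈ S, (0 < a 0 ↔ 0 < b 0) → a = b := by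
    intro a ha b hb hsign
    by_contra hne
    have hd := hS2 a ha b hb hne
    rw [dist_fin1] at hd
    have ha1 : |a 0| ≤ 1 := norm_fin1 a ▸ (hS1 a ha).1
    have hb1 : |b 0| ≤ 1 := norm_fin1 b ▸ (hS1 b hb).1
    have ha0 : a 0 ≠ 0 := by
      intro h0
      apply (hS1 a ha).2
      ext i
      have : i = 0 := Subsingleton.elim _ _
      subst this; simpa using h0
    have hb0 : b 0 ≠ 0 := by
      intro h0
      apply (hS1 b hb).2
      ext i
      have : i = 0 := Subsingleton.elim _ _
      subst this; simpa using h0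
    rcases lt_or_gt_of_ne ha0 with h | h <;> rcases lt_or_gt_of_ne hb0 with h' | h'
    · rw [abs_le] at ha1 hb1; rw [lt_abs] at hd
      rcases hd with h2 | h2 <;> linarith
    · exact absurd (hsign.mpr h') (not_lt.mpr h.le)
    · exact absurd (hsign.mp h) (not_lt.mpr h'.le)
    · rw [abs_le] at ha1 hb1; rw [lt_abs] at hd
      rcases hd with h2 | h2 <;> linarith
  calc S.card ≤ (Finset.univ : Finset Bool).card := by
        refine Finset.card_le_card_of_injOn (fun y => decide (0 < y 0))
          (fun a _ => Finset.mem_univ _) ?_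
        intro a ha b hb hab
        simp only [decide_eq_decide] at hab
        exact key a ha b hb hab
    _ = 2 := by simp

/- ## Dimension two: lower bound -/

noncomputable def pt (x y : ℝ) : EuclideanSpace ℝ (Fin 2) := !₂[x, y]

lemma dist_fin2 (a b : EuclideanSpace ℝ (Fin 2)) :
    dist a b = Real.sqrt ((a 0 - b 0)^2 + (a 1 - b 1)^2) := by
  rw [EuclideanSpace.dist_eq, Fin.sum_univ_two]
  simp [Real.dist_eq, sq_abs]

lemma norm_fin2 (a : EuclideanSpace ℝ (Fin 2)) :
    ‖a‖ = Real.sqrt ((a 0)^2 + (a 1)^2) := by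
  rw [EuclideanSpace.norm_eq, Fin.sum_univ_two]
  simp [Real.norm_eq_abs, sq_abs]

lemma dist_gt_one {a b : EuclideanSpace ℝ (Fin 2)}
    (h : 1 < (a 0 - b 0)^2 + (a 1 - b 1)^2) : 1 < dist a b := by
  rw [dist_fin2]
  have h0 : (0:ℝ) ≤ (a 0 - b 0)^2 + (a 1 - b 1)^2 := by positivity
  nlinarith [Real.sq_sqrt h0, Real.sqrt_nonneg ((a 0 - b 0)^2 + (a 1 - b 1)^2)]

noncomputable def pts : Fin 5 → EuclideanSpace ℝ (Fin 2) :=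
  ![pt 1 0, pt (3/10) (19/20), pt (-4/5) (29/50), pt (-4/5) (-29/50), pt (3/10) (-19/20)]

lemma pts_dist : ∀ i j : Fin 5, i ≠ j → 1 < dist (pts i) (pts j) := by
  intro i j hij
  fin_cases i <;> fin_cases j <;>
    first
      | exact absurd rfl hij
      | (apply dist_gt_one; simp only [pts, pt]; norm_num [Matrix.cons_val_zero, Matrix.cons_val_one])

lemma five_mem : (5 : ℕ) ∈ muSet 2 := by
  classical
  refine ⟨Finset.image pts Finset.univ, ?_, ?_, ?_⟩
  · intro y hy
    simp only [Finset.mem_image, Finset.mem_univ, true_and] at hy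
    obtain ⟨i, rfl⟩ := hy
    constructor
    · rw [norm_fin2]
      have h2 : (pts i 0)^2 + (pts i 1)^2 ≤ 1 := by
        fin_cases i <;> simp only [pts, pt] <;> norm_num
      calc Real.sqrt ((pts i 0)^2 + (pts i 1)^2) ≤ Real.sqrt 1 := Real.sqrt_le_sqrt h2
        _ = 1 := Real.sqrt_one
    · intro h
      have h0 := congrArg (fun v : EuclideanSpace ℝ (Fin 2) => v 0) h
      have h1 := congrArg (fun v : EuclideanSpace ℝ (Fin 2) => v 1) h
      fin_cases i <;> simp only [pts, pt] at h0 h1 <;> norm_num at h0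
  · intro a ha b hb hab
    simp only [Finset.mem_image, Finset.mem_univ, true_and] at ha hb
    obtain ⟨i, rfl⟩ := ha
    obtain ⟨j, rfl⟩ := hb
    exact pts_dist i j (fun h => hab (by rw [h]))
  · rw [Finset.card_image_of_injective _ ?_, Finset.card_univ, Fintype.card_fin]
    intro i j hij
    by_contra hne
    have := pts_dist i j hne
    rw [hij, dist_self] at this
    linarith

/- ## Dimension two: upper bound -/

lemma re_mul_conj (z w : ℂ) :
    (z * (starRingEnd ℂ) w).re = ‖z‖ * ‖w‖ * Real.cos (z.arg - w.arg) := by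
  conv_lhs => rw [← Complex.norm_mul_exp_arg_mul_I z, ← Complex.norm_mul_exp_arg_mul_I w]
  rw [map_mul, ← Complex.exp_conj]
  simp only [map_mul, Complex.conj_ofReal, Complex.conj_I, mul_neg]
  rw [mul_mul_mul_comm, ← Complex.exp_add, ← Complex.ofReal_mul,
    show ((z.arg : ℂ) * Complex.I + -((w.arg : ℂ) * Complex.I))
      = ((z.arg - w.arg : ℝ) * Complex.I) by push_cast; ring,
    Complex.re_ofReal_mul, Complex.exp_ofReal_mul_I_re]

lemma close_of_cos {z w : ℂ} (hz : ‖z‖ ≤ 1) (hw : ‖w‖ ≤ 1)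
    (hc : 1/2 ≤ Real.cos (z.arg - w.arg)) : dist z w ≤ 1 := by
  have hd : dist z w ^ 2 = Complex.normSq (z - w) := by
    rw [Complex.dist_eq, Complex.sq_norm]
  have hns := Complex.normSq_sub z w
  rw [re_mul_conj] at hns
  have h1 : Complex.normSq z = ‖z‖ ^ 2 := (Complex.sq_norm z).symm
  have h2 : Complex.normSq w = ‖w‖ ^ 2 := (Complex.sq_norm w).symm
  have hz0 : 0 ≤ ‖z‖ := norm_nonneg _
  have hw0 : 0 ≤ ‖w‖ := norm_nonneg _
  have key : Complex.normSq (z - w) ≤ 1 := by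
    rw [hns, h1, h2]
    nlinarith [mul_nonneg hz0 hw0]
  nlinarith [dist_nonneg (x := z) (y := w), hd]

lemma cos_ge_half {x : ℝ} (h0 : 0 ≤ x) (h1 : x ≤ π/3) : 1/2 ≤ Real.cos x := by
  rw [← Real.cos_pi_div_three]
  exact Real.cos_le_cos_of_nonneg_of_le_pi h0 (by linarith [Real.pi_pos]) h1

lemma no_six (A : Finset ℝ) (hA : A.card = 6)
    (hrange : ∀ α ∈ A, -π < α ∧ α ≤ π)
    (h : ∀ α ∈ A, ∀ β ∈ A, α ≠ β → Real.cos (α - β) < 1/2) : False := by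
  let f := A.orderIsoOfFin hA
  have hmem : ∀ i, (f i : ℝ) ∈ A := fun i => (f i).2
  have hlt : ∀ i j : Fin 6, i < j → π/3 < (f j : ℝ) - (f i : ℝ) := by
    intro i j hij
    have hne : (f i : ℝ) ≠ (f j : ℝ) := by
      have := f.strictMono hij
      exact fun hf => absurd (Subtype.ext hf : f i = f j) (f.injective.ne hij.ne)
    have hcos := h _ (hmem j) _ (hmem i) (Ne.symm hne)
    have hle : (f i : ℝ) ≤ (f j : ℝ) := (f.strictMono hij).le
    by_contra hcon
    push_neg at hcon
    exact absurd hcos (not_lt.mpr (cos_ge_half (by linarith) hcon))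
  have g01 := hlt 0 1 (by decide)
  have g12 := hlt 1 2 (by decide)
  have g23 := hlt 2 3 (by decide)
  have g34 := hlt 3 4 (by decide)
  have g45 := hlt 4 5 (by decide)
  have hr0 := hrange _ (hmem 0)
  have hr5 := hrange _ (hmem 5)
  have hcos := h _ (hmem 5) _ (hmem 0)
    (by have := f.strictMono (show (0:Fin 6) < 5 by decide)
        exact fun hf => absurd hf.symm (ne_of_lt this))
  have heq : Real.cos ((f 5 : ℝ) - (f 0 : ℝ))
      = Real.cos (2*π - ((f 5 : ℝ) - (f 0 : ℝ))) := (Real.cos_two_pi_sub _).symm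
  rw [heq] at hcos
  exact absurd hcos (not_lt.mpr (cos_ge_half (by linarith) (by linarith)))

noncomputable def toC (a : EuclideanSpace ℝ (Fin 2)) : ℂ := ⟨a 0, a 1⟩

lemma dist_toC (a b : EuclideanSpace ℝ (Fin 2)) : dist (toC a) (toC b) = dist a b := by
  rw [Complex.dist_eq_re_im, dist_fin2]
  rfl

lemma abs_toC (a : EuclideanSpace ℝ (Fin 2)) : ‖toC a‖ = ‖a‖ := by
  rw [Complex.norm_def, Complex.normSq_mk, norm_fin2]
  have h0 : (toC a).re = a 0 := rfl
  have h1 : (toC a).im = a 1 := rfl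
  rw [h0, h1]
  ring_nf

lemma le_five : ∀ k ∈ muSet 2, k ≤ 5 := by
  classical
  rintro k ⟨S, hS1, hS2, rfl⟩
  by_contra hcon
  push_neg at hcon
  obtain ⟨T, hTS, hT6⟩ := S.exists_subset_card_eq hcon
  have hT1 : ∀ y ∈ T, ‖y‖ ≤ 1 := fun y hy => (hS1 y (hTS hy)).1
  have hT2 : ∀ a ∈ T, ∀ b ∈ T, a ≠ b → 1 < dist a b :=
    fun a ha b hb hab => hS2 a (hTS ha) b (hTS hb) hab
  -- the key dichotomy: distinct points have cos of arg-difference < 1/2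
  have hkey : ∀ a ∈ T, ∀ b ∈ T, a ≠ b →
      Real.cos ((toC a).arg - (toC b).arg) < 1/2 := by
    intro a ha b hb hab
    by_contra hge
    push_neg at hge
    have := close_of_cos (by rw [abs_toC]; exact hT1 a ha)
      (by rw [abs_toC]; exact hT1 b hb) hge
    rw [dist_toC] at this
    exact absurd this (not_le.mpr (hT2 a ha b hb hab))
  have hinj : Set.InjOn (fun a => (toC a).arg) T := by
    intro a ha b hb hab
    by_contra hne
    have := hkey a ha b hb hne
    simp only at hab
    rw [hab, sub_self, Real.cos_zero] at this
    norm_num at this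
  refine no_six (T.image (fun a => (toC a).arg)) ?_ ?_ ?_
  · rw [Finset.card_image_of_injOn hinj, hT6]
  · intro α hα
    simp only [Finset.mem_image] at hα
    obtain ⟨a, _, rfl⟩ := hα
    exact ⟨Complex.neg_pi_lt_arg _, Complex.arg_le_pi _⟩
  · intro α hα β hβ hαβ
    simp only [Finset.mem_image] at hα hβ
    obtain ⟨a, ha, rfl⟩ := hα
    obtain ⟨b, hb, rfl⟩ := hβ
    exact hkey a ha b hb (fun h => hαβ (by rw [h]))

end Aux

/-- `μ_d` is finite (the packing cardinalities are bounded) for every `d ≥ 1`, and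
`μ₁ = 2`, `μ₂ = 5`. -/
theorem mu_finite_and_mu_one_two :
    (∀ d : ℕ, 1 ≤ d → BddAbove (muSet d)) ∧ mu 1 = 2 ∧ mu 2 = 5 := by
  refine ⟨fun d _ => bdd_muSet d, ?_, ?_⟩
  · exact le_antisymm (csSup_le ⟨2, two_mem⟩ le_two) (le_csSup (bdd_muSet 1) two_mem)
  · exact le_antisymm (csSup_le ⟨5, five_mem⟩ le_five) (le_csSup (bdd_muSet 2) five_mem)
end
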